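/- There exists an offspring distribution ξ on {0,1,2} with E[ξ]=1, Var(ξ)<∞, P(ξ=0)>0, P(ξ=1)>0, and integers n=3, k=1 such that E[W_k(T_n)] > E[W_k(T_{n+1})], where T_n is the Galton–Watson tree with offspring ξ conditioned to have n vertices and W_k counts vertices at distance k from the root. -/

import Mathlib

/-!
Conditioned on three vertices the tree is the path (weight `p₁² p₀`, one vertex at depth 1) or
the cherry (weight `p₂ p₀²`, two). Conditioned on four vertices it is the path or a root with one
child carrying a cherry (weights `p₁³ p₀` and `p₁ p₂ p₀²`, one vertex at depth 1), or one of two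
mirror-image trees of weight `p₁ p₂ p₀²` with two vertices at depth 1. With `a = p₁²` and
`b = p₀ p₂` this gives `E[W₁(T₃)] = (a + 2b)/(a + b)` and `E[W₁(T₄)] = (a + 5b)/(a + 3b)`, and the
first exceeds the second exactly when `a < b`. The critical law `p₀ = p₂ = 3/8`, `p₁ = 1/4` has
`a = 1/16 < 9/64 = b`.
-/

/-- Rooted ordered (plane) trees in which every vertex has at most two children. -/
inductive BTree where
  | leaf : BTree
  | one  : BTree → BTree
  | two  : BTree → BTree → BTree
deriving DecidableEq

namespace BTree

/-- Number of vertices. -/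
def size : BTree → ℕ
  | leaf => 1
  | one t => 1 + size t
  | two s t => 1 + size s + size t

/-- The Galton–Watson probability of a finite tree: the product over all vertices v
of p_{d(v)}, where d(v) is the outdegree of v. -/
noncomputable def gwProb (p : ℕ → ℝ) : BTree → ℝ
  | leaf => p 0
  | one t => p 1 * gwProb p t
  | two s t => p 2 * gwProb p s * gwProb p t

/-- `W k t` is the number of vertices of `t` at distance `k` from the root (the profile). -/
def W : ℕ → BTree → ℕ
  | 0, _ => 1
  | _+1, leaf => 0
  | k+1, one t => W k t
  | k+1, two s t => W k s + W k t

end BTree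

/-- The offspring distribution p₀ = (1-ε)/2, p₁ = ε, p₂ = (1-ε)/2. -/
noncomputable def offspring (ε : ℝ) : ℕ → ℝ :=
  fun n => if n = 0 then (1 - ε) / 2 else if n = 1 then ε else if n = 2 then (1 - ε) / 2 else 0

open BTree

/-- E[W_k(T_n)]: the expectation of the number of vertices at distance `k` from the root
of the Galton–Watson tree with offspring distribution `p` conditioned to have `n` vertices. -/
noncomputable def condExpW (p : ℕ → ℝ) (n k : ℕ) : ℝ :=
  (∑' t : BTree, if size t = n then gwProb p t * (W k t : ℝ) else 0) /
    (∑' t : BTree, if size t = n then gwProb p t else 0)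

namespace BTree

theorem one_le_size (t : BTree) : 1 ≤ size t := by
  cases t <;> simp only [size] <;> omega

theorem eq_leaf_of_size_eq_one {t : BTree} (h : size t = 1) : t = leaf := by
  rcases t with _ | s | ⟨s, u⟩
  · rfl
  all_goals have := one_le_size s; simp only [size] at h; omega

theorem eq_of_size_eq_two {t : BTree} (h : size t = 2) : t = one leaf := by
  rcases t with _ | s | ⟨s, u⟩
  · simp [size] at h
  · rw [eq_leaf_of_size_eq_one (t := s) (by simp only [size] at h; omega)]
  · have := one_le_size s; have := one_le_size u; simp only [size] at h; omega

theorem mem_of_size_eq_three {t : BTree} (h : size t = 3) :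
    t ∈ ({one (one leaf), two leaf leaf} : Finset BTree) := by
  rcases t with _ | s | ⟨s, u⟩
  · simp [size] at h
  · simp [eq_of_size_eq_two (t := s) (by simp only [size] at h; omega)]
  · have := one_le_size s; have := one_le_size u
    simp only [size] at h
    simp [eq_leaf_of_size_eq_one (t := s) (by omega), eq_leaf_of_size_eq_one (t := u) (by omega)]

theorem mem_of_size_eq_four {t : BTree} (h : size t = 4) :
    t ∈ ({one (one (one leaf)), one (two leaf leaf), two leaf (one leaf), two (one leaf) leaf} :
      Finset BTree) := by
  rcases t with _ | s | ⟨s, u⟩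
  · simp [size] at h
  · have := mem_of_size_eq_three (t := s) (by simp only [size] at h; omega)
    simp only [Finset.mem_insert, Finset.mem_singleton] at this
    rcases this with rfl | rfl <;> simp
  · have := one_le_size s; have := one_le_size u
    simp only [size] at h
    rcases (by omega : size s = 1 ∧ size u = 2 ∨ size s = 2 ∧ size u = 1) with ⟨hs, hu⟩ | ⟨hs, hu⟩
    · simp [eq_leaf_of_size_eq_one hs, eq_of_size_eq_two hu]
    · simp [eq_of_size_eq_two hs, eq_leaf_of_size_eq_one hu]

theorem tsum_ite_size_eq_sum {n : ℕ} (s : Finset BTree) (hs : ∀ t, size t = n → t ∈ s)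
    (f : BTree → ℝ) :
    (∑' t, if size t = n then f t else 0) = ∑ t ∈ s, if size t = n then f t else 0 :=
  tsum_eq_sum fun t ht => if_neg (mt (hs t) ht)

end BTree

theorem condExpW_three_one (p : ℕ → ℝ) :
    condExpW p 3 1 = (p 1 ^ 2 * p 0 + 2 * (p 2 * p 0 ^ 2)) / (p 1 ^ 2 * p 0 + p 2 * p 0 ^ 2) := by
  simp only [condExpW, tsum_ite_size_eq_sum _ (fun _ => mem_of_size_eq_three)]
  simp only [Finset.mem_singleton, reduceCtorEq, not_false_eq_true, Finset.sum_insert, size,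
    Nat.reduceAdd, ↓reduceIte, gwProb, W, Nat.cast_one, mul_one, Finset.sum_singleton, Nat.cast_ofNat]
  ring_nf

theorem condExpW_four_one (p : ℕ → ℝ) :
    condExpW p 4 1 = (p 1 ^ 3 * p 0 + 5 * (p 1 * p 2 * p 0 ^ 2)) /
      (p 1 ^ 3 * p 0 + 3 * (p 1 * p 2 * p 0 ^ 2)) := by
  simp only [condExpW, tsum_ite_size_eq_sum _ (fun _ => mem_of_size_eq_four)]
  simp only [Finset.mem_insert, one.injEq, reduceCtorEq, Finset.mem_singleton, or_self,
    not_false_eq_true, Finset.sum_insert, size, Nat.reduceAdd, ↓reduceIte, gwProb, W, Nat.cast_one,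
    mul_one, two.injEq, and_self, Nat.cast_ofNat, Finset.sum_singleton]
  ring_nf

theorem condExpW_four_one_lt_three_one {p : ℕ → ℝ} (h0 : 0 < p 0) (h1 : 0 < p 1)
    (h : p 1 ^ 2 < p 0 * p 2) : condExpW p 4 1 < condExpW p 3 1 := by
  have hb : 0 < p 0 * p 2 := (pow_pos h1 2).trans h
  have h2 : 0 < p 2 := pos_of_mul_pos_right hb h0.le
  rw [condExpW_three_one, condExpW_four_one, div_lt_div_iff₀ (by positivity) (by positivity)]
  have key : 0 < p 1 * p 0 ^ 2 * (p 0 * p 2) * (p 0 * p 2 - p 1 ^ 2) := by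
    have := sub_pos.mpr h
    positivity
  linear_combination key

theorem offspring_zero (ε : ℝ) : offspring ε 0 = (1 - ε) / 2 := rfl

theorem offspring_one (ε : ℝ) : offspring ε 1 = ε := rfl

theorem offspring_two (ε : ℝ) : offspring ε 2 = (1 - ε) / 2 := rfl

theorem offspring_of_three_le (ε : ℝ) {j : ℕ} (hj : 3 ≤ j) : offspring ε j = 0 := by
  unfold offspring
  rw [if_neg (by omega), if_neg (by omega), if_neg (by omega)]

theorem offspring_nonneg {ε : ℝ} (h₀ : 0 ≤ ε) (h₁ : ε ≤ 1) (j : ℕ) : 0 ≤ offspring ε j := by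
  by_cases hj : 3 ≤ j
  · rw [offspring_of_three_le ε hj]
  · interval_cases j <;> simp only [offspring_zero, offspring_one, offspring_two] <;> linarith

/-- There is an offspring distribution on {0,1,2} with mean 1, P(ξ=0)>0, P(ξ=1)>0,
such that E[W₁(T₃)] > E[W₁(T₄)] for the conditioned Galton–Watson trees. -/
theorem exists_offspring_profile_not_monotone :
    ∃ p : ℕ → ℝ, (∀ j, 0 ≤ p j) ∧ (∀ j, 3 ≤ j → p j = 0) ∧
      p 0 + p 1 + p 2 = 1 ∧ 0 < p 0 ∧ 0 < p 1 ∧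
      p 1 + 2 * p 2 = 1 ∧   -- E[ξ] = 1 (criticality; Var(ξ) is finite automatically)
      condExpW p 3 1 > condExpW p 4 1 := by
  refine ⟨offspring (1 / 4), offspring_nonneg (by norm_num) (by norm_num),
    fun j => offspring_of_three_le _, ?_, ?_, ?_, ?_,
    condExpW_four_one_lt_three_one ?_ ?_ ?_⟩ <;>
  norm_num [offspring_zero, offspring_one, offspring_two]
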